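/- arXiv:1703.01779 — 9 statements merged into one kernel-verified Lean document; each statement's English description precedes it below -/
import Mathlib

section
/- If x, y > 0 and (1/C) ≤ sinh x / sinh y ≤ C for some C > 1, then (1/C) ≤ x/y ≤ C. -/
/-! Since `sinh` is convex on `[0, ∞)` and vanishes at `0`, the slope `sinh t / t` increases in `t`;
hence `x / y ≤ sinh x / sinh y` whenever `0 < y ≤ x`, and `x / y ≤ 1` otherwise. -/

open Real Set

theorem Real.convexOn_sinh : ConvexOn ℝ (Ici 0) sinh :=
  MonotoneOn.convexOn_of_deriv (convex_Ici 0) continuous_sinh.continuousOn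
    differentiable_sinh.differentiableOn
    (by simpa only [deriv_sinh, interior_Ici] using
      cosh_strictMonoOn.monotoneOn.mono Ioi_subset_Ici_self)

theorem Real.sinh_div_self_monotoneOn : MonotoneOn (fun t ↦ sinh t / t) (Ioi 0) := by
  intro s hs t ht hst
  simpa only [sinh_zero, sub_zero] using
    convexOn_sinh.secant_mono self_mem_Ici (Ioi_subset_Ici_self hs) (Ioi_subset_Ici_self ht)
      hs.ne' ht.ne' hst

theorem Real.div_le_sinh_div_sinh {x y : ℝ} (hy : 0 < y) (hyx : y ≤ x) :
    x / y ≤ sinh x / sinh y := by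
  have hx : 0 < x := hy.trans_le hyx
  have hslope : sinh y / y ≤ sinh x / x := sinh_div_self_monotoneOn hy hx hyx
  rw [div_le_div_iff₀ hy hx] at hslope
  rw [div_le_div_iff₀ hy (sinh_pos_iff.2 hy)]
  linarith

theorem Real.div_le_max_one_sinh_div_sinh {x y : ℝ} (hy : 0 < y) :
    x / y ≤ max 1 (sinh x / sinh y) := by
  rcases le_total y x with hyx | hxy
  · exact le_max_of_le_right (div_le_sinh_div_sinh hy hyx)
  · exact le_max_of_le_left ((div_le_one hy).2 hxy)

theorem stmt_1 (C x y : ℝ) (hC : 1 < C) (hx : 0 < x) (hy : 0 < y)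
    (h1 : 1 / C ≤ Real.sinh x / Real.sinh y)
    (h2 : Real.sinh x / Real.sinh y ≤ C) :
    1 / C ≤ x / y ∧ x / y ≤ C := by
  have hC₀ : 0 < C := one_pos.trans hC
  have h1' : sinh y / sinh x ≤ C := by
    rwa [one_div_le hC₀ (div_pos (sinh_pos_iff.2 hx) (sinh_pos_iff.2 hy)), one_div_div] at h1
  constructor
  · rw [one_div_le hC₀ (div_pos hx hy), one_div_div]
    exact (div_le_max_one_sinh_div_sinh hx).trans (max_le hC.le h1')
  · exact (div_le_max_one_sinh_div_sinh hy).trans (max_le hC.le h2)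
end

section
/- Let f(c, ρ₁, ρ₂) = cosh ρ₁ · cosh ρ₂ · cosh c − sinh ρ₁ · sinh ρ₂. If 0 < c ≤ c', then for all real ρ₁, ρ₂: f(c, ρ₁, ρ₂)/f(c', ρ₁, ρ₂) ≥ (cosh c − 1)/(cosh c' − 1). -/
noncomputable def f (c ρ₁ ρ₂ : ℝ) : ℝ :=
  Real.cosh ρ₁ * Real.cosh ρ₂ * Real.cosh c - Real.sinh ρ₁ * Real.sinh ρ₂

/-! Writing `f c ρ₁ ρ₂ = a (cosh c - 1) + d` with `a = cosh ρ₁ cosh ρ₂ ≥ 0` and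
`d = cosh (ρ₁ - ρ₂) > 0`, the claim is that adding the same positive constant `d` to the
numerator and denominator of `a x / a y` (with `x ≤ y`) can only push the ratio up. -/

open Real

lemma div_le_mul_add_div_mul_add {x y a d : ℝ} (hy : 0 < y) (hxy : x ≤ y) (ha : 0 ≤ a)
    (hd : 0 < d) : x / y ≤ (a * x + d) / (a * y + d) := by
  have hayd : 0 < a * y + d := by positivity
  rw [div_le_div_iff₀ hy hayd]
  nlinarith

lemma f_eq_mul_cosh_sub_one_add_cosh_sub (c ρ₁ ρ₂ : ℝ) :
    f c ρ₁ ρ₂ = cosh ρ₁ * cosh ρ₂ * (cosh c - 1) + cosh (ρ₁ - ρ₂) := by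
  rw [f, cosh_sub]
  ring

theorem stmt_5 (c c' : ℝ) (hc : 0 < c) (hcc' : c ≤ c') (ρ₁ ρ₂ : ℝ) :
    f c ρ₁ ρ₂ / f c' ρ₁ ρ₂ ≥ (Real.cosh c - 1) / (Real.cosh c' - 1) := by
  have hc' : 0 < cosh c' - 1 := sub_pos.mpr (one_lt_cosh.mpr (hc.trans_le hcc').ne')
  have hcosh : cosh c - 1 ≤ cosh c' - 1 := by
    gcongr
    exact cosh_le_cosh.mpr (by rwa [abs_of_pos hc, abs_of_pos (hc.trans_le hcc')])
  rw [ge_iff_le, f_eq_mul_cosh_sub_one_add_cosh_sub, f_eq_mul_cosh_sub_one_add_cosh_sub]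
  exact div_le_mul_add_div_mul_add hc' hcosh (by positivity) (cosh_pos _)
end

section
/- Let f(c, ρ₁, ρ₂) = cosh ρ₁ · cosh ρ₂ · cosh c − sinh ρ₁ · sinh ρ₂. If 0 < c ≤ c', then for all real ρ₁, ρ₂: (f(c, ρ₁, ρ₂) − 1)/(f(c', ρ₁, ρ₂) − 1) ≥ (cosh c − 1)/(cosh c' − 1). -/
/-!
Writing `A = cosh ρ₁ cosh ρ₂` and `D = cosh (ρ₁ - ρ₂) - 1 ≥ 0`, one has
`f c ρ₁ ρ₂ - 1 = A (cosh c - 1) + D`. Adding the same nonnegative quantity to the numerator and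
the denominator of a fraction at most one can only increase it, and
`0 ≤ cosh c - 1 ≤ cosh c' - 1`.
-/

open Real

theorem div_le_add_div_add {α : Type*} [Field α] [LinearOrder α] [IsStrictOrderedRing α]
    {a b d : α} (ha : 0 ≤ a) (hab : a ≤ b) (hd : 0 ≤ d) : a / b ≤ (a + d) / (b + d) := by
  rcases hab.lt_or_eq with hab | rfl
  · have hb : 0 < b := ha.trans_lt hab
    rw [div_le_div_iff₀ hb (by positivity)]
    nlinarith [mul_le_mul_of_nonneg_left hab.le hd]
  · rcases ha.lt_or_eq with ha | rfl
    · rw [div_self ha.ne', div_self (by positivity)]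
    · simpa using div_nonneg hd hd

theorem f_sub_one_eq (c ρ₁ ρ₂ : ℝ) :
    f c ρ₁ ρ₂ - 1 = cosh ρ₁ * cosh ρ₂ * (cosh c - 1) + (cosh (ρ₁ - ρ₂) - 1) := by
  rw [f, cosh_sub]
  ring

theorem stmt_7 (c c' : ℝ) (hc : 0 < c) (hcc' : c ≤ c') (ρ₁ ρ₂ : ℝ) :
    (f c ρ₁ ρ₂ - 1) / (f c' ρ₁ ρ₂ - 1)
      ≥ (Real.cosh c - 1) / (Real.cosh c' - 1) := by
  have hA : 0 < cosh ρ₁ * cosh ρ₂ := mul_pos (cosh_pos ρ₁) (cosh_pos ρ₂)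
  have hcosh : cosh c ≤ cosh c' := by
    rw [cosh_le_cosh, abs_of_pos hc, abs_of_pos (hc.trans_le hcc')]
    exact hcc'
  rw [ge_iff_le, f_sub_one_eq, f_sub_one_eq, ← mul_div_mul_left _ _ hA.ne']
  exact div_le_add_div_add (mul_nonneg hA.le (sub_nonneg.2 (one_le_cosh c)))
    (mul_le_mul_of_nonneg_left (sub_le_sub_right hcosh 1) hA.le) (sub_nonneg.2 (one_le_cosh _))
end

section
/- Let f(c, ρ₁, ρ₂) = cosh ρ₁ · cosh ρ₂ · cosh c − sinh ρ₁ · sinh ρ₂ and let d(c, ρ₁, ρ₂) = arccosh(f(c, ρ₁, ρ₂)). Suppose c, c' > 0 and (1/C) ≤ (cosh c − 1)/(cosh c' − 1) ≤ C for some C > 1. Then for all real ρ₁, ρ₂: (1/C) ≤ d(c, ρ₁, ρ₂)/d(c', ρ₁, ρ₂) ≤ C. -/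
noncomputable def arcosh (x : ℝ) : ℝ := Real.log (x + Real.sqrt (x ^ 2 - 1))

noncomputable def d (c ρ₁ ρ₂ : ℝ) : ℝ := arcosh (f c ρ₁ ρ₂)

/-!
Writing `f c ρ₁ ρ₂ - 1 = cosh ρ₁ cosh ρ₂ (cosh c - 1) + (cosh (ρ₁ - ρ₂) - 1)`, the quantity
`cosh (d c ρ₁ ρ₂) - 1` depends affinely on `cosh c - 1` with nonnegative coefficients, so a
ratio bound `C ≥ 1` on `cosh c - 1` transfers to `cosh d - 1`. It then transfers to `d` itself
because `x ↦ cosh x - 1` is convex and vanishes at `0`, whence `K (cosh x - 1) ≤ cosh (K x) - 1`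
for `K ≥ 1`.
-/

namespace Real

theorem convexOn_cosh : ConvexOn ℝ Set.univ cosh :=
  convexOn_univ_of_deriv2_nonneg differentiable_cosh (by rw [deriv_cosh]; exact differentiable_sinh)
    fun x => by simpa only [Function.iterate_succ, Function.iterate_zero, Function.comp_apply,
      id, deriv_cosh, deriv_sinh] using (cosh_pos x).le

theorem mul_cosh_sub_one_le_cosh_mul_sub_one {K : ℝ} (hK : 1 ≤ K) (x : ℝ) :
    K * (cosh x - 1) ≤ cosh (K * x) - 1 := by
  have hK₀ : 0 < K := by linarith
  have hconv := convexOn_cosh.2 (Set.mem_univ (K * x)) (Set.mem_univ 0)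
    (inv_nonneg.2 hK₀.le) (sub_nonneg.2 (inv_le_one_of_one_le₀ hK)) (add_sub_cancel _ _)
  simp only [smul_eq_mul, inv_mul_cancel_left₀ hK₀.ne', mul_zero, add_zero, cosh_zero,
    mul_one] at hconv
  have := mul_le_mul_of_nonneg_left hconv hK₀.le
  rw [mul_add, mul_inv_cancel_left₀ hK₀.ne', mul_sub, mul_inv_cancel₀ hK₀.ne'] at this
  linarith

theorem le_mul_of_cosh_sub_one_le_mul {a b C : ℝ} (ha : 0 ≤ a) (hb : 0 ≤ b) (hC : 1 ≤ C)
    (h : cosh a - 1 ≤ C * (cosh b - 1)) : a ≤ C * b := by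
  have hcosh : cosh a ≤ cosh (C * b) := by
    linarith [mul_cosh_sub_one_le_cosh_mul_sub_one hC b]
  rw [cosh_le_cosh, abs_of_nonneg ha, abs_of_nonneg (by positivity)] at hcosh
  exact hcosh

end Real

theorem f_sub_one (c ρ₁ ρ₂ : ℝ) :
    f c ρ₁ ρ₂ - 1 =
      Real.cosh ρ₁ * Real.cosh ρ₂ * (Real.cosh c - 1) + (Real.cosh (ρ₁ - ρ₂) - 1) := by
  rw [f, Real.cosh_sub]
  ring

theorem one_le_f (c ρ₁ ρ₂ : ℝ) : 1 ≤ f c ρ₁ ρ₂ := by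
  have hA : 0 ≤ Real.cosh ρ₁ * Real.cosh ρ₂ * (Real.cosh c - 1) :=
    mul_nonneg (mul_pos (Real.cosh_pos _) (Real.cosh_pos _)).le (sub_nonneg.2 (Real.one_le_cosh c))
  linarith [f_sub_one c ρ₁ ρ₂, Real.one_le_cosh (ρ₁ - ρ₂)]

theorem one_lt_f {c : ℝ} (hc : c ≠ 0) (ρ₁ ρ₂ : ℝ) : 1 < f c ρ₁ ρ₂ := by
  have hA : 0 < Real.cosh ρ₁ * Real.cosh ρ₂ * (Real.cosh c - 1) :=
    mul_pos (mul_pos (Real.cosh_pos _) (Real.cosh_pos _)) (sub_pos.2 (Real.one_lt_cosh.2 hc))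
  linarith [f_sub_one c ρ₁ ρ₂, Real.one_le_cosh (ρ₁ - ρ₂)]

-- `arcosh` is definitionally Mathlib's `Real.arcosh`.
theorem cosh_d (c ρ₁ ρ₂ : ℝ) : Real.cosh (d c ρ₁ ρ₂) = f c ρ₁ ρ₂ :=
  Real.cosh_arcosh (one_le_f c ρ₁ ρ₂)

theorem d_nonneg (c ρ₁ ρ₂ : ℝ) : 0 ≤ d c ρ₁ ρ₂ :=
  Real.arcosh_nonneg (one_le_f c ρ₁ ρ₂)

theorem d_pos {c : ℝ} (hc : c ≠ 0) (ρ₁ ρ₂ : ℝ) : 0 < d c ρ₁ ρ₂ :=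
  Real.arcosh_pos (one_lt_f hc ρ₁ ρ₂)

theorem d_le_mul_d {c c' C : ℝ} (hC : 1 ≤ C)
    (h : Real.cosh c - 1 ≤ C * (Real.cosh c' - 1)) (ρ₁ ρ₂ : ℝ) :
    d c ρ₁ ρ₂ ≤ C * d c' ρ₁ ρ₂ := by
  apply Real.le_mul_of_cosh_sub_one_le_mul (d_nonneg c ρ₁ ρ₂) (d_nonneg c' ρ₁ ρ₂) hC
  rw [cosh_d, cosh_d, f_sub_one, f_sub_one]
  have hA : 0 ≤ Real.cosh ρ₁ * Real.cosh ρ₂ := (mul_pos (Real.cosh_pos _) (Real.cosh_pos _)).le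
  have hB : 0 ≤ Real.cosh (ρ₁ - ρ₂) - 1 := sub_nonneg.2 (Real.one_le_cosh _)
  calc Real.cosh ρ₁ * Real.cosh ρ₂ * (Real.cosh c - 1) + (Real.cosh (ρ₁ - ρ₂) - 1)
      ≤ Real.cosh ρ₁ * Real.cosh ρ₂ * (C * (Real.cosh c' - 1)) +
          C * (Real.cosh (ρ₁ - ρ₂) - 1) :=
        add_le_add (mul_le_mul_of_nonneg_left h hA) (le_mul_of_one_le_left hB hC)
    _ = C * (Real.cosh ρ₁ * Real.cosh ρ₂ * (Real.cosh c' - 1) + (Real.cosh (ρ₁ - ρ₂) - 1)) := by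
        ring

theorem stmt_9_general (c c' C : ℝ) (hc' : 0 < c') (hC : 1 < C)
    (h1 : 1 / C ≤ (Real.cosh c - 1) / (Real.cosh c' - 1))
    (h2 : (Real.cosh c - 1) / (Real.cosh c' - 1) ≤ C) (ρ₁ ρ₂ : ℝ) :
    1 / C ≤ d c ρ₁ ρ₂ / d c' ρ₁ ρ₂ ∧ d c ρ₁ ρ₂ / d c' ρ₁ ρ₂ ≤ C := by
  have hC₀ : 0 < C := by linarith
  have hcosh' : 0 < Real.cosh c' - 1 := sub_pos.2 (Real.one_lt_cosh.2 hc'.ne')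
  have hd' : 0 < d c' ρ₁ ρ₂ := d_pos hc'.ne' ρ₁ ρ₂
  have hle : Real.cosh c - 1 ≤ C * (Real.cosh c' - 1) := by
    rw [div_le_iff₀ hcosh'] at h2
    linarith
  have hge : Real.cosh c' - 1 ≤ C * (Real.cosh c - 1) := by
    rw [div_le_div_iff₀ hC₀ hcosh'] at h1
    linarith
  constructor
  · rw [div_le_div_iff₀ hC₀ hd']
    linarith [d_le_mul_d hC.le hge ρ₁ ρ₂]
  · rw [div_le_iff₀ hd']
    linarith [d_le_mul_d hC.le hle ρ₁ ρ₂]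

theorem stmt_9 (c c' C : ℝ) (hc : 0 < c) (hc' : 0 < c') (hC : 1 < C)
    (h1 : 1 / C ≤ (Real.cosh c - 1) / (Real.cosh c' - 1))
    (h2 : (Real.cosh c - 1) / (Real.cosh c' - 1) ≤ C) (ρ₁ ρ₂ : ℝ) :
    1 / C ≤ d c ρ₁ ρ₂ / d c' ρ₁ ρ₂ ∧ d c ρ₁ ρ₂ / d c' ρ₁ ρ₂ ≤ C :=
  stmt_9_general c c' C hc' hC h1 h2 ρ₁ ρ₂
end

section
/- Let b ≥ 0 be fixed. For all t ∈ ℝ, inf over s ∈ ℝ of [cosh(s)·cosh(s − t)·cosh(b) − sinh(s)·sinh(s − t)] = 2·cosh²(t/2)·cosh²(b/2) − 1; equivalently, this infimum equals cosh(L) = 2·cosh(t/2)²·(cosh b + 1)/2 − 1, where L is defined by cosh(L/2) = cosh(t/2)·cosh(b/2). -/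
theorem stmt_10 (b t : ℝ) (hb : 0 ≤ b) :
    IsGLB
      (Set.range fun s : ℝ =>
        Real.cosh s * Real.cosh (s - t) * Real.cosh b -
          Real.sinh s * Real.sinh (s - t))
      (2 * Real.cosh (t / 2) ^ 2 * Real.cosh (b / 2) ^ 2 - 1) := by
  have hct : Real.cosh t = 2 * Real.cosh (t / 2) ^ 2 - 1 := by
    have h := Real.cosh_two_mul (t / 2)
    have h2 := Real.cosh_sq (t / 2)
    have : 2 * (t / 2) = t := by ring
    rw [this] at h
    nlinarith [h, h2]
  have hcb : Real.cosh b = 2 * Real.cosh (b / 2) ^ 2 - 1 := by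
    have h := Real.cosh_two_mul (b / 2)
    have h2 := Real.cosh_sq (b / 2)
    have : 2 * (b / 2) = b := by ring
    rw [this] at h
    nlinarith [h, h2]
  have key : ∀ s : ℝ,
      Real.cosh s * Real.cosh (s - t) * Real.cosh b -
        Real.sinh s * Real.sinh (s - t)
      = (Real.cosh (2 * s - t) * (Real.cosh b - 1)
          + Real.cosh t * (Real.cosh b + 1)) / 2 := by
    intro s
    have h1 := Real.cosh_add s (s - t)
    have h2 := Real.cosh_sub s (s - t)
    have e1 : s + (s - t) = 2 * s - t := by ring
    have e2 : s - (s - t) = t := by ring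
    rw [e1] at h1
    rw [e2] at h2
    nlinarith [h1, h2]
  apply IsLeast.isGLB
  constructor
  · exact ⟨t / 2, by
      show Real.cosh (t / 2) * Real.cosh (t / 2 - t) * Real.cosh b -
          Real.sinh (t / 2) * Real.sinh (t / 2 - t) =
        2 * Real.cosh (t / 2) ^ 2 * Real.cosh (b / 2) ^ 2 - 1
      rw [key (t / 2)]
      have : 2 * (t / 2) - t = 0 := by ring
      rw [this, Real.cosh_zero, hct, hcb]
      ring⟩
  · rintro x ⟨s, rfl⟩
    simp only
    rw [key s]
    have h1 : 1 ≤ Real.cosh (2 * s - t) := Real.one_le_cosh _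
    have h2 : 1 ≤ Real.cosh b := Real.one_le_cosh b
    have h3 : 1 ≤ Real.cosh (t / 2) ^ 2 := by
      nlinarith [Real.one_le_cosh (t / 2)]
    nlinarith [hct, hcb, h3]
end

section
/- For reals a, b, c with quantities as below: if cosh d₁ = cosh ρ₁ cosh ρ₂ cosh h_Λ − sinh ρ₁ sinh ρ₂ and cosh d₂ = cosh ρ₁ cosh ρ₂ cosh h₀ − sinh ρ₁ sinh ρ₂ with h_Λ, h₀ > 0 and (1/K) ≤ (cosh h_Λ − 1)/(cosh h₀ − 1) ≤ K for some K > 1, then |d₁ − d₂| ≤ arccosh K and (1/K) ≤ d₁/d₂ ≤ K, where d₁, d₂ > 0. -/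
open Real (cosh sinh)

theorem arcosh_eq_real_arcosh : arcosh = Real.arcosh := rfl

theorem ConvexOn.mul_sub_apply_zero_le {𝕜 E : Type*} [Field 𝕜] [LinearOrder 𝕜]
    [IsStrictOrderedRing 𝕜] [AddCommMonoid E] [Module 𝕜 E] {s : Set E} {f : E → 𝕜}
    (hf : ConvexOn 𝕜 s f) {c : 𝕜} (hc : 1 ≤ c) {x : E} (h0 : 0 ∈ s)
    (hx : c • x ∈ s) : c * (f x - f 0) ≤ f (c • x) - f 0 := by
  have hc0 : 0 < c := by linarith
  have hx_eq : c⁻¹ • c • x + (1 - c⁻¹) • (0 : E) = x := by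
    rw [smul_smul, inv_mul_cancel₀ hc0.ne', one_smul, smul_zero, add_zero]
  have h := hf.2 hx h0 (inv_nonneg.2 hc0.le) (sub_nonneg.2 (inv_le_one_of_one_le₀ hc))
    (add_sub_cancel _ _)
  rw [hx_eq, smul_eq_mul, smul_eq_mul] at h
  have := mul_le_mul_of_nonneg_left h hc0.le
  field_simp at this ⊢
  linarith

theorem convexOn_cosh : ConvexOn ℝ Set.univ cosh :=
  Monotone.convexOn_univ_of_deriv Real.differentiable_cosh
    (by rw [Real.deriv_cosh]; exact Real.sinh_strictMono.monotone)

theorem mul_cosh_sub_one_le {c : ℝ} (hc : 1 ≤ c) (u : ℝ) :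
    c * (cosh u - 1) ≤ cosh (c * u) - 1 := by
  simpa using convexOn_cosh.mul_sub_apply_zero_le hc (Set.mem_univ 0) (Set.mem_univ (c • u))

namespace Real

theorem arcosh_le_arcosh_add_arcosh {x y K : ℝ} (hx : 0 < x) (hy : 1 ≤ y) (hK : 1 ≤ K)
    (h : x ≤ K * y) : arcosh x ≤ arcosh y + arcosh K := by
  have hsinh : 0 ≤ sinh (arcosh y) * sinh (arcosh K) :=
    mul_nonneg (sinh_nonneg_iff.2 (arcosh_nonneg hy)) (sinh_nonneg_iff.2 (arcosh_nonneg hK))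
  have hcosh : x ≤ cosh (arcosh y + arcosh K) := by
    rw [cosh_add, cosh_arcosh hy, cosh_arcosh hK]
    linarith
  calc arcosh x ≤ arcosh (cosh (arcosh y + arcosh K)) :=
        (arcosh_le_arcosh hx (cosh_pos _)).2 hcosh
    _ = arcosh y + arcosh K := arcosh_cosh (add_nonneg (arcosh_nonneg hy) (arcosh_nonneg hK))

theorem arcosh_le_mul_arcosh {x y K : ℝ} (hx : 0 < x) (hy : 1 ≤ y) (hK : 1 ≤ K)
    (h : x - 1 ≤ K * (y - 1)) : arcosh x ≤ K * arcosh y := by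
  have hcosh : x ≤ cosh (K * arcosh y) := by
    have := mul_cosh_sub_one_le hK (arcosh y)
    rw [cosh_arcosh hy] at this
    linarith
  calc arcosh x ≤ arcosh (cosh (K * arcosh y)) := (arcosh_le_arcosh hx (cosh_pos _)).2 hcosh
    _ = K * arcosh y := arcosh_cosh (mul_nonneg (by linarith) (arcosh_nonneg hy))

end Real

section

variable (ρ₁ ρ₂ : ℝ)

theorem cosh_mul_cosh_mul_cosh_sub_sinh_mul_sinh_sub_one (h : ℝ) :
    cosh ρ₁ * cosh ρ₂ * cosh h - sinh ρ₁ * sinh ρ₂ - 1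
      = (cosh (ρ₁ - ρ₂) - 1) + cosh ρ₁ * cosh ρ₂ * (cosh h - 1) := by
  rw [Real.cosh_sub]
  ring

theorem one_le_cosh_mul_cosh_mul_cosh_sub_sinh_mul_sinh (h : ℝ) :
    1 ≤ cosh ρ₁ * cosh ρ₂ * cosh h - sinh ρ₁ * sinh ρ₂ := by
  have := cosh_mul_cosh_mul_cosh_sub_sinh_mul_sinh_sub_one ρ₁ ρ₂ h
  have := Real.one_le_cosh (ρ₁ - ρ₂)
  have := mul_nonneg (mul_pos (Real.cosh_pos ρ₁) (Real.cosh_pos ρ₂)).le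
    (sub_nonneg.2 (Real.one_le_cosh h))
  linarith

theorem one_lt_cosh_mul_cosh_mul_cosh_sub_sinh_mul_sinh {h : ℝ} (hh : h ≠ 0) :
    1 < cosh ρ₁ * cosh ρ₂ * cosh h - sinh ρ₁ * sinh ρ₂ := by
  have := cosh_mul_cosh_mul_cosh_sub_sinh_mul_sinh_sub_one ρ₁ ρ₂ h
  have := Real.one_le_cosh (ρ₁ - ρ₂)
  have := mul_pos (mul_pos (Real.cosh_pos ρ₁) (Real.cosh_pos ρ₂))
    (sub_pos.2 (Real.one_lt_cosh.2 hh))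
  linarith

theorem cosh_mul_cosh_mul_cosh_sub_sinh_mul_sinh_sub_one_le {h h' K : ℝ} (hK : 1 ≤ K)
    (hhh' : cosh h - 1 ≤ K * (cosh h' - 1)) :
    cosh ρ₁ * cosh ρ₂ * cosh h - sinh ρ₁ * sinh ρ₂ - 1
      ≤ K * (cosh ρ₁ * cosh ρ₂ * cosh h' - sinh ρ₁ * sinh ρ₂ - 1) := by
  simp only [cosh_mul_cosh_mul_cosh_sub_sinh_mul_sinh_sub_one]
  have hC : 0 ≤ cosh ρ₁ * cosh ρ₂ := mul_nonneg (Real.cosh_pos ρ₁).le (Real.cosh_pos ρ₂).le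
  have hA : 0 ≤ cosh (ρ₁ - ρ₂) - 1 := sub_nonneg.2 (Real.one_le_cosh _)
  linarith [mul_le_mul_of_nonneg_left hhh' hC, le_mul_of_one_le_left hA hK]

end

theorem stmt_11_general (ρ₁ ρ₂ hΛ h₀ K d₁ d₂ : ℝ) (hh₀ : 0 < h₀)
    (hK : 1 < K)
    (hd₁ : d₁ = arcosh
      (Real.cosh ρ₁ * Real.cosh ρ₂ * Real.cosh hΛ - Real.sinh ρ₁ * Real.sinh ρ₂))
    (hd₂ : d₂ = arcosh
      (Real.cosh ρ₁ * Real.cosh ρ₂ * Real.cosh h₀ - Real.sinh ρ₁ * Real.sinh ρ₂))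
    (h1 : 1 / K ≤ (Real.cosh hΛ - 1) / (Real.cosh h₀ - 1))
    (h2 : (Real.cosh hΛ - 1) / (Real.cosh h₀ - 1) ≤ K) :
    |d₁ - d₂| ≤ arcosh K ∧ 1 / K ≤ d₁ / d₂ ∧ d₁ / d₂ ≤ K := by
  rw [arcosh_eq_real_arcosh] at hd₁ hd₂ ⊢
  set x₁ := cosh ρ₁ * cosh ρ₂ * cosh hΛ - sinh ρ₁ * sinh ρ₂
  set x₂ := cosh ρ₁ * cosh ρ₂ * cosh h₀ - sinh ρ₁ * sinh ρ₂
  have hK₀ : 0 < K := zero_lt_one.trans hK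
  have ht₀ : 0 < cosh h₀ - 1 := sub_pos.2 (Real.one_lt_cosh.2 hh₀.ne')
  have hx₁ : 1 ≤ x₁ := one_le_cosh_mul_cosh_mul_cosh_sub_sinh_mul_sinh ρ₁ ρ₂ hΛ
  have hx₂ : 1 < x₂ := one_lt_cosh_mul_cosh_mul_cosh_sub_sinh_mul_sinh ρ₁ ρ₂ hh₀.ne'
  have hx₁₂ : x₁ - 1 ≤ K * (x₂ - 1) :=
    cosh_mul_cosh_mul_cosh_sub_sinh_mul_sinh_sub_one_le ρ₁ ρ₂ hK.le ((div_le_iff₀ ht₀).1 h2)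
  have hx₂₁ : x₂ - 1 ≤ K * (x₁ - 1) :=
    cosh_mul_cosh_mul_cosh_sub_sinh_mul_sinh_sub_one_le ρ₁ ρ₂ hK.le
      (by simpa [mul_comm] using (div_le_div_iff₀ hK₀ ht₀).1 h1)
  have hd₂_pos : 0 < d₂ := hd₂ ▸ Real.arcosh_pos hx₂
  have hd₁₂ : Real.arcosh x₁ ≤ Real.arcosh x₂ + Real.arcosh K :=
    Real.arcosh_le_arcosh_add_arcosh (by linarith) hx₂.le hK.le (by linarith)
  have hd₂₁ : Real.arcosh x₂ ≤ Real.arcosh x₁ + Real.arcosh K :=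
    Real.arcosh_le_arcosh_add_arcosh (by linarith) hx₁ hK.le (by linarith)
  have hd₁₂' := Real.arcosh_le_mul_arcosh (by linarith) hx₂.le hK.le hx₁₂
  have hd₂₁' := Real.arcosh_le_mul_arcosh (by linarith) hx₁ hK.le hx₂₁
  subst hd₁ hd₂
  refine ⟨abs_sub_le_iff.2 ⟨by linarith, by linarith⟩, ?_, (div_le_iff₀ hd₂_pos).2 (by linarith)⟩
  rw [div_le_div_iff₀ hK₀ hd₂_pos]
  linarith

theorem stmt_11 (ρ₁ ρ₂ hΛ h₀ K d₁ d₂ : ℝ) (hhΛ : 0 < hΛ) (hh₀ : 0 < h₀)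
    (hK : 1 < K)
    (hd₁ : d₁ = arcosh
      (Real.cosh ρ₁ * Real.cosh ρ₂ * Real.cosh hΛ - Real.sinh ρ₁ * Real.sinh ρ₂))
    (hd₂ : d₂ = arcosh
      (Real.cosh ρ₁ * Real.cosh ρ₂ * Real.cosh h₀ - Real.sinh ρ₁ * Real.sinh ρ₂))
    (h1 : 1 / K ≤ (Real.cosh hΛ - 1) / (Real.cosh h₀ - 1))
    (h2 : (Real.cosh hΛ - 1) / (Real.cosh h₀ - 1) ≤ K) :
    |d₁ - d₂| ≤ arcosh K ∧ 1 / K ≤ d₁ / d₂ ∧ d₁ / d₂ ≤ K :=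
  stmt_11_general ρ₁ ρ₂ hΛ h₀ K d₁ d₂ hh₀ hK hd₁ hd₂ h1 h2
end

section
/- Let λ₁, λ₂ > 0 and ℓ ≥ 0. Define cosh h_Λ = (cosh(λ₁/2)·cosh(λ₂/2) + cosh(ℓ/2)) / (sinh(λ₁/2)·sinh(λ₂/2)) and cosh h₀ the same with ℓ = 0. Then 1 ≤ (cosh h_Λ − 1)/(cosh h₀ − 1) ≤ (1 + cosh(ℓ/2))/2. -/
/-! Subtracting 1 from `(cosh a cosh b + t) / (sinh a sinh b)` turns the numerator into
`cosh (a - b) + t`, so the common denominator cancels in the ratio, which becomes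
`(c + cosh (ℓ/2)) / (c + 1)` with `c = cosh ((λ₁ - λ₂)/2) ≥ 1`. Both bounds are then elementary;
the upper one is `(cosh (ℓ/2) - 1) (c - 1) ≥ 0`. -/

open Real

lemma cosh_mul_cosh_add_div_sub_one {a b t : ℝ} (h : sinh a * sinh b ≠ 0) :
    (cosh a * cosh b + t) / (sinh a * sinh b) - 1 = (cosh (a - b) + t) / (sinh a * sinh b) := by
  rw [cosh_sub, div_sub_one h]
  ring_nf

lemma one_le_add_div_add_one {c L : ℝ} (hc : 0 < c + 1) (hL : 1 ≤ L) :
    1 ≤ (c + L) / (c + 1) := by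
  rw [one_le_div hc]
  linarith

lemma add_div_add_one_le_one_add_div_two {c L : ℝ} (hc : 1 ≤ c) (hL : 1 ≤ L) :
    (c + L) / (c + 1) ≤ (1 + L) / 2 := by
  rw [div_le_div_iff₀ (by linarith) two_pos]
  nlinarith [mul_nonneg (sub_nonneg.2 hL) (sub_nonneg.2 hc)]

theorem stmt_13_general (lam₁ lam₂ ℓ hΛ h₀ : ℝ) (hlam₁ : 0 < lam₁) (hlam₂ : 0 < lam₂)
    (hhΛ : Real.cosh hΛ =
      (Real.cosh (lam₁ / 2) * Real.cosh (lam₂ / 2) + Real.cosh (ℓ / 2)) /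
        (Real.sinh (lam₁ / 2) * Real.sinh (lam₂ / 2)))
    (hh₀ : Real.cosh h₀ =
      (Real.cosh (lam₁ / 2) * Real.cosh (lam₂ / 2) + 1) /
        (Real.sinh (lam₁ / 2) * Real.sinh (lam₂ / 2))) :
    1 ≤ (Real.cosh hΛ - 1) / (Real.cosh h₀ - 1) ∧
      (Real.cosh hΛ - 1) / (Real.cosh h₀ - 1) ≤ (1 + Real.cosh (ℓ / 2)) / 2 := by
  have hs : sinh (lam₁ / 2) * sinh (lam₂ / 2) ≠ 0 :=
    (mul_pos (sinh_pos_iff.2 (half_pos hlam₁)) (sinh_pos_iff.2 (half_pos hlam₂))).ne'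
  have hc : 1 ≤ cosh (lam₁ / 2 - lam₂ / 2) := one_le_cosh _
  have hratio : (cosh hΛ - 1) / (cosh h₀ - 1) =
      (cosh (lam₁ / 2 - lam₂ / 2) + cosh (ℓ / 2)) / (cosh (lam₁ / 2 - lam₂ / 2) + 1) := by
    rw [hhΛ, hh₀, cosh_mul_cosh_add_div_sub_one hs, cosh_mul_cosh_add_div_sub_one hs,
      div_div_div_cancel_right₀ hs]
  rw [hratio]
  exact ⟨one_le_add_div_add_one (by linarith) (one_le_cosh _),
    add_div_add_one_le_one_add_div_two hc (one_le_cosh _)⟩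

theorem stmt_13 (lam₁ lam₂ ℓ hΛ h₀ : ℝ) (hlam₁ : 0 < lam₁) (hlam₂ : 0 < lam₂) (hℓ : 0 ≤ ℓ)
    (hhΛ : Real.cosh hΛ =
      (Real.cosh (lam₁ / 2) * Real.cosh (lam₂ / 2) + Real.cosh (ℓ / 2)) /
        (Real.sinh (lam₁ / 2) * Real.sinh (lam₂ / 2)))
    (hh₀ : Real.cosh h₀ =
      (Real.cosh (lam₁ / 2) * Real.cosh (lam₂ / 2) + 1) /
        (Real.sinh (lam₁ / 2) * Real.sinh (lam₂ / 2))) :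
    1 ≤ (Real.cosh hΛ - 1) / (Real.cosh h₀ - 1) ∧
      (Real.cosh hΛ - 1) / (Real.cosh h₀ - 1) ≤ (1 + Real.cosh (ℓ / 2)) / 2 :=
  stmt_13_general lam₁ lam₂ ℓ hΛ h₀ hlam₁ hlam₂ hhΛ hh₀
end

section
/- Let λ₁ > 0 and k, K be constants with 0 < k ≤ K. Suppose l_Λ > 0 satisfies sinh(λ₁/2) = l_Λ·k'·sqrt(1 + l_Λ²·k'') + l_Λ·k''·sqrt(1 + l_Λ²·k'²) for some k', k'' ∈ [k, K] (i.e. k ≤ k', k'' ≤ K). Then sinh(λ₁/4)/K ≤ l_Λ ≤ sinh(λ₁/4)/k. -/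
/-!
Since `2 x √(1 + x²) = sinh (2 arsinh x)` is increasing in `x`, replacing both `k'` and `k''` by
`k` (resp. `K`) bounds `sinh (λ₁/2) = sinh (2 · λ₁/4)` between `sinh (2 arsinh (k l_Λ))` and
`sinh (2 arsinh (K l_Λ))`; monotonicity of `sinh` and `arsinh` then gives
`k l_Λ ≤ sinh (λ₁/4) ≤ K l_Λ`.
-/

open Real

lemma two_mul_mul_sqrt_one_add_sq (x : ℝ) : 2 * x * √(1 + x ^ 2) = sinh (2 * arsinh x) := by
  rw [sinh_two_mul, sinh_arsinh, cosh_arsinh, mul_assoc]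

lemma two_mul_mul_sqrt_one_add_sq_le_sinh_two_mul_iff (x y : ℝ) :
    2 * x * √(1 + x ^ 2) ≤ sinh (2 * y) ↔ x ≤ sinh y := by
  rw [two_mul_mul_sqrt_one_add_sq, sinh_le_sinh, mul_le_mul_iff_right₀ two_pos,
    ← sinh_le_sinh, sinh_arsinh]

lemma sinh_two_mul_le_two_mul_mul_sqrt_one_add_sq_iff (x y : ℝ) :
    sinh (2 * y) ≤ 2 * x * √(1 + x ^ 2) ↔ sinh y ≤ x := by
  rw [two_mul_mul_sqrt_one_add_sq, sinh_le_sinh, mul_le_mul_iff_right₀ two_pos,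
    ← sinh_le_sinh, sinh_arsinh]

theorem stmt_15_general (lam₁ k K k' k'' lΛ : ℝ) (hk : 0 < k) (hkK : k ≤ K)
    (hk' : k' ∈ Set.Icc k K) (hk'' : k'' ∈ Set.Icc k K) (hl : 0 < lΛ)
    (hEq : Real.sinh (lam₁ / 2) =
      lΛ * k' * Real.sqrt (1 + lΛ ^ 2 * k'' ^ 2) +
        lΛ * k'' * Real.sqrt (1 + lΛ ^ 2 * k' ^ 2)) :
    Real.sinh (lam₁ / 4) / K ≤ lΛ ∧ lΛ ≤ Real.sinh (lam₁ / 4) / k := by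
  obtain ⟨hk'k, hk'K⟩ := hk'
  obtain ⟨hk''k, hk''K⟩ := hk''
  have hK : 0 < K := hk.trans_le hkK
  have hk'0 : 0 < k' := hk.trans_le hk'k
  have hk''0 : 0 < k'' := hk.trans_le hk''k
  have hsinh : sinh (2 * (lam₁ / 4)) =
      lΛ * k' * √(1 + lΛ ^ 2 * k'' ^ 2) + lΛ * k'' * √(1 + lΛ ^ 2 * k' ^ 2) := by
    rw [← hEq]; congr 1; ring
  have hdiag (c : ℝ) : 2 * (c * lΛ) * √(1 + (c * lΛ) ^ 2) =
      lΛ * c * √(1 + lΛ ^ 2 * c ^ 2) + lΛ * c * √(1 + lΛ ^ 2 * c ^ 2) := by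
    ring_nf
  have hlow : k * lΛ ≤ sinh (lam₁ / 4) := by
    rw [← two_mul_mul_sqrt_one_add_sq_le_sinh_two_mul_iff, hsinh, hdiag]
    gcongr
  have hhigh : sinh (lam₁ / 4) ≤ K * lΛ := by
    rw [← sinh_two_mul_le_two_mul_mul_sqrt_one_add_sq_iff, hsinh, hdiag]
    gcongr
  constructor
  · rw [div_le_iff₀ hK, mul_comm]; exact hhigh
  · rw [le_div_iff₀ hk, mul_comm]; exact hlow

theorem stmt_15 (lam₁ k K k' k'' lΛ : ℝ) (hlam₁ : 0 < lam₁) (hk : 0 < k) (hkK : k ≤ K)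
    (hk' : k' ∈ Set.Icc k K) (hk'' : k'' ∈ Set.Icc k K) (hl : 0 < lΛ)
    (hEq : Real.sinh (lam₁ / 2) =
      lΛ * k' * Real.sqrt (1 + lΛ ^ 2 * k'' ^ 2) +
        lΛ * k'' * Real.sqrt (1 + lΛ ^ 2 * k' ^ 2)) :
    Real.sinh (lam₁ / 4) / K ≤ lΛ ∧ lΛ ≤ Real.sinh (lam₁ / 4) / k :=
  stmt_15_general lam₁ k K k' k'' lΛ hk hkK hk' hk'' hl hEq
end

section
/- Let t ∈ ℝ, ℓ > 0, and define for n ∈ ℤ: u_n = cosh((t + n)·ℓ). Then (u₂ − u₁)/(u₁ − u₀) = (cosh(tℓ + 2ℓ) − cosh(tℓ + ℓ))/(cosh(tℓ + ℓ) − cosh(tℓ)) = sinh(tℓ + 3ℓ/2)/sinh(tℓ + ℓ/2), and moreover the map t ↦ sinh(tℓ + 3ℓ/2)/sinh(tℓ + ℓ/2) is injective on the set where sinh(tℓ + ℓ/2) ≠ 0. -/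
/-!
Writing each difference of consecutive values as `cosh A - cosh B = 2 sinh((A+B)/2) sinh((A-B)/2)`,
the common factor `2 sinh(ℓ/2)` cancels from the ratio. For injectivity, cross-multiplying
`sinh(a + ℓ)/sinh a = sinh(b + ℓ)/sinh b` and expanding by the addition formula leaves
`sinh ℓ · sinh(b - a) = 0`, which forces `a = b` since `ℓ ≠ 0`.
-/

open Real

theorem Real.cosh_sub_cosh (a b : ℝ) :
    cosh a - cosh b = 2 * sinh ((a + b) / 2) * sinh ((a - b) / 2) := by
  obtain ⟨p, q, rfl, rfl⟩ : ∃ p q, a = p + q ∧ b = p - q :=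
    ⟨(a + b) / 2, (a - b) / 2, by ring, by ring⟩
  rw [cosh_add, cosh_sub, show (p + q + (p - q)) / 2 = p by ring,
    show (p + q - (p - q)) / 2 = q by ring]
  ring

theorem Real.cosh_add_sub_cosh (x h : ℝ) :
    cosh (x + h) - cosh x = 2 * sinh (x + h / 2) * sinh (h / 2) := by
  rw [cosh_sub_cosh]
  ring_nf

theorem Real.cosh_diff_ratio_eq_sinh_ratio {h : ℝ} (hh : h ≠ 0) (x : ℝ) :
    (cosh (x + 2 * h) - cosh (x + h)) / (cosh (x + h) - cosh x) =
      sinh (x + 3 * h / 2) / sinh (x + h / 2) := by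
  have hsinh : sinh (h / 2) ≠ 0 := sinh_ne_zero.mpr (div_ne_zero hh two_ne_zero)
  have hnum : cosh (x + 2 * h) - cosh (x + h) = 2 * sinh (x + 3 * h / 2) * sinh (h / 2) := by
    rw [show x + 2 * h = (x + h) + h by ring, cosh_add_sub_cosh]
    ring_nf
  rw [hnum, cosh_add_sub_cosh, mul_div_mul_right _ _ hsinh, mul_div_mul_left _ _ two_ne_zero]

theorem Real.injOn_sinh_add_div_sinh {c : ℝ} (hc : c ≠ 0) :
    Set.InjOn (fun x => sinh (x + c) / sinh x) {x | sinh x ≠ 0} := by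
  intro a ha b hb hab
  simp only [Set.mem_ofPred_eq] at ha hb hab
  rw [div_eq_div_iff ha hb, sinh_add, sinh_add] at hab
  have hprod : sinh c * sinh (b - a) = 0 := by
    rw [sinh_sub]
    linear_combination hab
  have hba : sinh (b - a) = 0 := (mul_eq_zero.mp hprod).resolve_left (sinh_ne_zero.mpr hc)
  linarith [sinh_eq_zero.mp hba]

theorem stmt_18 (ℓ : ℝ) (hℓ : 0 < ℓ) :
    (∀ t : ℝ,
      (Real.cosh ((t + 2) * ℓ) - Real.cosh ((t + 1) * ℓ)) /
          (Real.cosh ((t + 1) * ℓ) - Real.cosh ((t + 0) * ℓ)) =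
        (Real.cosh (t * ℓ + 2 * ℓ) - Real.cosh (t * ℓ + ℓ)) /
          (Real.cosh (t * ℓ + ℓ) - Real.cosh (t * ℓ)) ∧
      (Real.cosh (t * ℓ + 2 * ℓ) - Real.cosh (t * ℓ + ℓ)) /
          (Real.cosh (t * ℓ + ℓ) - Real.cosh (t * ℓ)) =
        Real.sinh (t * ℓ + 3 * ℓ / 2) / Real.sinh (t * ℓ + ℓ / 2)) ∧
    ∀ s t : ℝ, Real.sinh (s * ℓ + ℓ / 2) ≠ 0 → Real.sinh (t * ℓ + ℓ / 2) ≠ 0 →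
      Real.sinh (s * ℓ + 3 * ℓ / 2) / Real.sinh (s * ℓ + ℓ / 2) =
        Real.sinh (t * ℓ + 3 * ℓ / 2) / Real.sinh (t * ℓ + ℓ / 2) →
      s = t := by
  refine ⟨fun t => ⟨by ring_nf, cosh_diff_ratio_eq_sinh_ratio hℓ.ne' _⟩, ?_⟩
  intro s t hs ht hst
  have hshift : ∀ u : ℝ, u * ℓ + 3 * ℓ / 2 = (u * ℓ + ℓ / 2) + ℓ := fun u => by ring
  rw [hshift, hshift] at hst
  have hmul : s * ℓ = t * ℓ := by
    linarith [injOn_sinh_add_div_sinh hℓ.ne' hs ht hst]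
  exact mul_right_cancel₀ hℓ.ne' hmul
end
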